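/- arXiv:0904.0494 — 6 statements merged into one kernel-verified Lean document; each statement's English description precedes it below -/
import Mathlib

section
/- Suppose there exists a k-sparse vector x ∈ ℂ^N and a vector x' ≠ x with Ax' = Ax and ‖x'‖₁ ≤ ‖x‖₁. Then for every L ≥ 1, the matrix X = (x|x|⋯|x) ∈ ℂ^{N×L} is not the unique minimizer of ‖Z‖_{2,1} subject to AZ = AX. -/
open scoped BigOperators

/-- If `ℓ₁`-minimization fails for a `k`-sparse `x` (there is `x' ≠ x` with `Ax' = Ax` and
`‖x'‖₁ ≤ ‖x‖₁`), then for every `L ≥ 1` the matrix `X = (x|⋯|x)` is not the unique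
minimizer of `‖·‖_{2,1}` subject to `AZ = AX`. -/
theorem stmt_4 (n N k L : ℕ) (hL : 1 ≤ L) (A : Matrix (Fin n) (Fin N) ℂ)
    (x x' : Fin N → ℂ)
    (hk : (Finset.univ.filter fun j => x j ≠ 0).card ≤ k)
    (hne : x' ≠ x) (hAx : A.mulVec x' = A.mulVec x)
    (h1 : ∑ j, ‖x' j‖ ≤ ∑ j, ‖x j‖) :
    ∃ Z : Matrix (Fin N) (Fin L) ℂ,
      Z ≠ Matrix.of (fun j (_ : Fin L) => x j) ∧
      A * Z = A * Matrix.of (fun j (_ : Fin L) => x j) ∧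
      ∑ j : Fin N, Real.sqrt (∑ l, ‖Z j l‖ ^ 2) ≤
        ∑ j : Fin N, Real.sqrt (∑ l, ‖Matrix.of (fun j (_ : Fin L) => x j) j l‖ ^ 2) := by
  refine ⟨Matrix.of (fun j (_ : Fin L) => x' j), ?_, ?_, ?_⟩
  · intro h
    apply hne
    funext j
    have := congrFun (congrFun h j) ⟨0, hL⟩
    simpa using this
  · ext i l
    simp only [Matrix.mul_apply, Matrix.of_apply]
    have := congrFun hAx i
    simpa [Matrix.mulVec, dotProduct] using this
  · have key : ∀ y : Fin N → ℂ, ∀ j : Fin N,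
        Real.sqrt (∑ _l : Fin L, ‖y j‖ ^ 2) = Real.sqrt L * ‖y j‖ := by
      intro y j
      rw [Finset.sum_const, Finset.card_univ, Fintype.card_fin, nsmul_eq_mul,
        Real.sqrt_mul (by positivity), Real.sqrt_sq (norm_nonneg _)]
    simp only [Matrix.of_apply]
    calc ∑ j : Fin N, Real.sqrt (∑ _l : Fin L, ‖x' j‖ ^ 2)
        = Real.sqrt L * ∑ j, ‖x' j‖ := by
          rw [Finset.mul_sum]; exact Finset.sum_congr rfl fun j _ => key x' j
      _ ≤ Real.sqrt L * ∑ j, ‖x j‖ := by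
          exact mul_le_mul_of_nonneg_left h1 (Real.sqrt_nonneg _)
      _ = ∑ j : Fin N, Real.sqrt (∑ _l : Fin L, ‖x j‖ ^ 2) := by
          rw [Finset.mul_sum]; exact (Finset.sum_congr rfl fun j _ => key x j).symm
end

section
/- Let A_L = √2 · Γ((L+1)/2)/Γ(L/2). Then for all integers L ≥ 1, √(2/π)·√L ≤ A_L ≤ √L. -/
/-!
Log-convexity of `Γ` gives `Γ(x + 1/2) ≤ √x Γ(x)` for `x > 0`, which with `x = L/2` is the upper
bound `A_L ≤ √L`. The same inequality at `x + 1/2` reads `x Γ(x) ≤ √(x + 1/2) Γ(x + 1/2)`, so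
`A_L ≥ L / √(L + 1)`, and this dominates `√(2L/π)` as soon as `(π - 2) L ≥ 2`, i.e. for `L ≥ 2`.
For `L = 1` the lower bound is an equality, since `Γ(1/2) = √π`.
-/

open Real

namespace Real

theorem Gamma_add_half_le_sqrt_mul_Gamma {x : ℝ} (hx : 0 < x) :
    Gamma (x + 1 / 2) ≤ √x * Gamma x := by
  have hconv := Gamma_mul_add_mul_le_rpow_Gamma_mul_rpow_Gamma hx (by linarith : 0 < x + 1)
    one_half_pos one_half_pos (add_halves 1)
  rw [Gamma_add_one hx.ne', mul_rpow hx.le (Gamma_pos_of_pos hx).le, ← sqrt_eq_rpow,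
    ← sqrt_eq_rpow] at hconv
  calc Gamma (x + 1 / 2) = Gamma (1 / 2 * x + 1 / 2 * (x + 1)) := by ring_nf
    _ ≤ √(Gamma x) * (√x * √(Gamma x)) := hconv
    _ = √x * Gamma x := by rw [mul_left_comm, mul_self_sqrt (Gamma_pos_of_pos hx).le]

theorem mul_Gamma_le_sqrt_mul_Gamma_add_half {x : ℝ} (hx : 0 < x) :
    x * Gamma x ≤ √(x + 1 / 2) * Gamma (x + 1 / 2) := by
  have h := Gamma_add_half_le_sqrt_mul_Gamma (by linarith : 0 < x + 1 / 2)
  rwa [add_assoc, add_halves, Gamma_add_one hx.ne'] at h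

theorem sqrt_two_mul_Gamma_add_half_div_Gamma_le {x : ℝ} (hx : 0 < x) :
    √2 * Gamma (x + 1 / 2) / Gamma x ≤ √(2 * x) := by
  rw [div_le_iff₀ (Gamma_pos_of_pos hx), sqrt_mul zero_le_two, mul_assoc]
  gcongr
  exact Gamma_add_half_le_sqrt_mul_Gamma hx

theorem sqrt_two_mul_div_sqrt_le_sqrt_two_mul_Gamma_add_half_div_Gamma {x : ℝ} (hx : 0 < x) :
    √2 * x / √(x + 1 / 2) ≤ √2 * Gamma (x + 1 / 2) / Gamma x := by
  rw [div_le_div_iff₀ (sqrt_pos.2 (by linarith)) (Gamma_pos_of_pos hx), mul_assoc, mul_assoc,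
    mul_comm (Gamma _)]
  exact mul_le_mul_of_nonneg_left (mul_Gamma_le_sqrt_mul_Gamma_add_half hx) (sqrt_nonneg 2)

theorem sqrt_two_div_pi_mul_sqrt_two_mul_le {x : ℝ} (hx : 1 ≤ x) :
    √(2 / π) * √(2 * x) ≤ √2 * x / √(x + 1 / 2) := by
  have hrhs : √2 * x = √(2 * x ^ 2) := by
    rw [sqrt_mul zero_le_two, sqrt_sq (by linarith)]
  rw [le_div_iff₀ (sqrt_pos.2 (by linarith)), ← sqrt_mul (by positivity),
    ← sqrt_mul (by positivity), hrhs]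
  apply sqrt_le_sqrt
  rw [div_mul_eq_mul_div, div_mul_eq_mul_div, div_le_iff₀ pi_pos]
  nlinarith [pi_gt_three]

end Real

/-- For `A_L = √2 Γ((L+1)/2)/Γ(L/2)` and all integers `L ≥ 1`,
`√(2/π) √L ≤ A_L ≤ √L`. -/
theorem stmt_9 (L : ℕ) (hL : 1 ≤ L) :
    Real.sqrt (2 / Real.pi) * Real.sqrt L ≤
      Real.sqrt 2 * Real.Gamma ((L + 1) / 2) / Real.Gamma (L / 2) ∧
    Real.sqrt 2 * Real.Gamma ((L + 1) / 2) / Real.Gamma (L / 2) ≤ Real.sqrt L := by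
  obtain ⟨x, hx, hLx⟩ : ∃ x : ℝ, 1 / 2 ≤ x ∧ (L : ℝ) = 2 * x :=
    ⟨L / 2, by linarith [(Nat.one_le_cast (α := ℝ)).2 hL], by ring⟩
  rw [show ((L : ℝ) + 1) / 2 = x + 1 / 2 by rw [hLx]; ring, show (L : ℝ) / 2 = x by rw [hLx]; ring,
    hLx]
  refine ⟨?_, sqrt_two_mul_Gamma_add_half_div_Gamma_le (by linarith)⟩
  rcases hL.eq_or_lt with rfl | hL2
  · obtain rfl : x = 1 / 2 := by norm_num at hLx; linarith
    norm_num [Gamma_one_half_eq, sqrt_div zero_le_two]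
  · exact (sqrt_two_div_pi_mul_sqrt_two_mul_le (by linarith [(Nat.ofNat_le_cast (α := ℝ)).2 hL2])).trans
      (sqrt_two_mul_div_sqrt_le_sqrt_two_mul_Gamma_add_half_div_Gamma (by linarith))
end

section
/- Let A ∈ ℂ^{n×N} have unit-norm columns and coherence μ = max_{j≠ℓ} |⟨a_j, a_ℓ⟩|. Let S ⊆ {1,…,N} have cardinality k, and suppose (√k + (k−1)δ)·μ < δ for some δ > 0. Then A_S*A_S is invertible and ‖A_S† a_ℓ‖₂ ≤ δ for all ℓ ∉ S. -/
/-!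
The Gram matrix `G = A_S* A_S` has unit diagonal and off-diagonal entries of modulus at most `μ`,
so `I - G` has absolute row and column sums at most `(k - 1)μ`, and the Schur test gives
`‖(I - G)x‖ ≤ (k - 1)μ‖x‖`, i.e. `‖Gx‖ ≥ (1 - (k - 1)μ)‖x‖`. The hypothesis forces
`(k - 1)μ < 1`, so `G` is invertible. The vector `x = A_S† a_ℓ` solves `Gx = A_S* a_ℓ`, whose `k`
entries `⟨a_j, a_ℓ⟩` (`j ≠ ℓ`) are bounded by `μ`, hence
`‖x‖ ≤ √k μ / (1 - (k - 1)μ) < δ`.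
-/

open Matrix
open scoped BigOperators

/-- The column submatrix `A_S`. -/
noncomputable def colSub {n N : ℕ} (A : Matrix (Fin n) (Fin N) ℂ) (S : Finset (Fin N)) :
    Matrix (Fin n) {j // j ∈ S} ℂ :=
  Matrix.of fun i j => A i j.1

/-- The pseudo-inverse `A_S† = (A_S* A_S)⁻¹ A_S*`. -/
noncomputable def pinv {n N : ℕ} (A : Matrix (Fin n) (Fin N) ℂ) (S : Finset (Fin N)) :
    Matrix {j // j ∈ S} (Fin n) ℂ :=
  ((colSub A S)ᴴ * colSub A S)⁻¹ * (colSub A S)ᴴ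

section SchurTest

variable {R ι κ : Type*} [SeminormedRing R] [Fintype κ]

lemma norm_mulVec_apply_sq_le (M : Matrix ι κ R) (x : κ → R) (i : ι) :
    ‖(M *ᵥ x) i‖ ^ 2 ≤ (∑ j, ‖M i j‖) * ∑ j, ‖M i j‖ * ‖x j‖ ^ 2 := by
  have hle : ‖(M *ᵥ x) i‖ ≤ ∑ j, ‖M i j‖ * ‖x j‖ :=
    (norm_sum_le _ _).trans (Finset.sum_le_sum fun j _ => norm_mul_le _ _)
  calc ‖(M *ᵥ x) i‖ ^ 2 ≤ (∑ j, ‖M i j‖ * ‖x j‖) ^ 2 := by gcongr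
    _ ≤ _ := Finset.sum_sq_le_sum_mul_sum_of_sq_le_mul _ (fun j _ => norm_nonneg _)
        (fun j _ => by positivity) fun j _ => (by ring : _ = _).le

theorem sum_norm_mulVec_sq_le [Fintype ι] (M : Matrix ι κ R) {r c : ℝ} (hr0 : 0 ≤ r)
    (hr : ∀ i, ∑ j, ‖M i j‖ ≤ r) (hc : ∀ j, ∑ i, ‖M i j‖ ≤ c) (x : κ → R) :
    ∑ i, ‖(M *ᵥ x) i‖ ^ 2 ≤ r * c * ∑ j, ‖x j‖ ^ 2 :=
  calc ∑ i, ‖(M *ᵥ x) i‖ ^ 2 ≤ ∑ i, r * ∑ j, ‖M i j‖ * ‖x j‖ ^ 2 := by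
        gcongr with i
        exact (norm_mulVec_apply_sq_le M x i).trans (by gcongr; exact hr i)
    _ = r * ∑ j, (∑ i, ‖M i j‖) * ‖x j‖ ^ 2 := by
        simp only [← Finset.mul_sum, Finset.sum_mul]
        rw [Finset.sum_comm]
    _ ≤ r * ∑ j, c * ‖x j‖ ^ 2 := by gcongr with j; exact hc j
    _ = r * c * ∑ j, ‖x j‖ ^ 2 := by rw [← Finset.mul_sum, mul_assoc]

end SchurTest

lemma sum_norm_le_of_apply_eq_zero {E ι : Type*} [SeminormedAddGroup E] [Fintype ι]
    [DecidableEq ι] {v : ι → E} {μ : ℝ} {i : ι} (hi : v i = 0) (hv : ∀ j, ‖v j‖ ≤ μ) :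
    ∑ j, ‖v j‖ ≤ (Fintype.card ι - 1) * μ := by
  have hcard : ((Finset.univ.erase i).card : ℝ) = Fintype.card ι - 1 := by
    rw [← Finset.card_univ, ← Finset.card_erase_add_one (Finset.mem_univ i)]
    push_cast; ring
  rw [← Finset.add_sum_erase _ _ (Finset.mem_univ i), hi, norm_zero, zero_add, ← hcard,
    ← nsmul_eq_mul]
  exact Finset.sum_le_card_nsmul _ _ _ fun j _ => hv j

section EuclideanNorm

variable {𝕜 ι : Type*} [RCLike 𝕜] [Fintype ι]

lemma norm_toLp_le_mul_of_sum_sq_le {x y : ι → 𝕜} {c : ℝ} (hc : 0 ≤ c)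
    (h : ∑ i, ‖y i‖ ^ 2 ≤ c ^ 2 * ∑ i, ‖x i‖ ^ 2) :
    ‖(WithLp.toLp 2 y : EuclideanSpace 𝕜 ι)‖ ≤ c * ‖(WithLp.toLp 2 x : EuclideanSpace 𝕜 ι)‖ := by
  rw [← pow_le_pow_iff_left₀ (norm_nonneg _) (by positivity) two_ne_zero, mul_pow,
    EuclideanSpace.norm_sq_eq, EuclideanSpace.norm_sq_eq]
  exact h

lemma norm_toLp_le_sqrt_card_mul {x : ι → 𝕜} {μ : ℝ} (hμ : 0 ≤ μ) (hx : ∀ i, ‖x i‖ ≤ μ) :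
    ‖(WithLp.toLp 2 x : EuclideanSpace 𝕜 ι)‖ ≤ √(Fintype.card ι) * μ := by
  rw [EuclideanSpace.norm_eq, ← Real.sqrt_sq hμ, ← Real.sqrt_mul (Nat.cast_nonneg _)]
  gcongr
  calc ∑ i, ‖x i‖ ^ 2 ≤ ∑ _i : ι, μ ^ 2 := by gcongr with i; exact hx i
    _ = _ := by simp

end EuclideanNorm

section UnitDiagonal

variable {𝕜 ι : Type*} [RCLike 𝕜] [Fintype ι] [DecidableEq ι] {G : Matrix ι ι 𝕜} {μ : ℝ}

lemma norm_sub_mulVec_le_of_unit_diagonal (hμ : 0 ≤ μ) (hdiag : ∀ i, G i i = 1)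
    (hoff : ∀ i j, i ≠ j → ‖G i j‖ ≤ μ) (x : ι → 𝕜) :
    ‖(WithLp.toLp 2 (x - G *ᵥ x) : EuclideanSpace 𝕜 ι)‖ ≤
      (Fintype.card ι - 1) * μ * ‖(WithLp.toLp 2 x : EuclideanSpace 𝕜 ι)‖ := by
  rcases isEmpty_or_nonempty ι with hι | hι
  · simp [EuclideanSpace.norm_eq]
  set M := 1 - G
  have hMdiag : ∀ i, M i i = 0 := by simp [M, hdiag]
  have hM : ∀ i j, ‖M i j‖ ≤ μ := by
    intro i j
    rcases eq_or_ne i j with rfl | hij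
    · simpa [hMdiag] using hμ
    · simpa [M, one_apply_ne hij] using hoff i j hij
  have hc : 0 ≤ (Fintype.card ι - 1 : ℝ) * μ :=
    mul_nonneg (sub_nonneg.2 (by exact_mod_cast Fintype.card_pos)) hμ
  have hMx : x - G *ᵥ x = M *ᵥ x := by simp [M, sub_mulVec]
  rw [hMx]
  apply norm_toLp_le_mul_of_sum_sq_le hc
  rw [sq]
  exact sum_norm_mulVec_sq_le M hc (fun i => sum_norm_le_of_apply_eq_zero (hMdiag i) (hM i))
    (fun j => sum_norm_le_of_apply_eq_zero (hMdiag j) (hM · j)) x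

lemma mul_norm_le_norm_mulVec_of_unit_diagonal (hμ : 0 ≤ μ) (hdiag : ∀ i, G i i = 1)
    (hoff : ∀ i j, i ≠ j → ‖G i j‖ ≤ μ) (x : ι → 𝕜) :
    (1 - (Fintype.card ι - 1) * μ) * ‖(WithLp.toLp 2 x : EuclideanSpace 𝕜 ι)‖ ≤
      ‖(WithLp.toLp 2 (G *ᵥ x) : EuclideanSpace 𝕜 ι)‖ := by
  have hsub := norm_sub_mulVec_le_of_unit_diagonal hμ hdiag hoff x
  rw [WithLp.toLp_sub] at hsub
  linarith [norm_sub_norm_le (WithLp.toLp 2 x : EuclideanSpace 𝕜 ι) (WithLp.toLp 2 (G *ᵥ x))]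

lemma isUnit_det_of_unit_diagonal (hμ : 0 ≤ μ) (hdiag : ∀ i, G i i = 1)
    (hoff : ∀ i j, i ≠ j → ‖G i j‖ ≤ μ) (hc : (Fintype.card ι - 1) * μ < 1) :
    IsUnit G.det := by
  rw [isUnit_iff_ne_zero, Ne, ← exists_mulVec_eq_zero_iff]
  rintro ⟨v, hv0, hv⟩
  have hlow := mul_norm_le_norm_mulVec_of_unit_diagonal hμ hdiag hoff v
  rw [hv, WithLp.toLp_zero, norm_zero] at hlow
  have hnorm : ‖(WithLp.toLp 2 v : EuclideanSpace 𝕜 ι)‖ = 0 :=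
    le_antisymm (nonpos_of_mul_nonpos_right hlow (by linarith)) (norm_nonneg _)
  exact hv0 (by simpa using hnorm)

end UnitDiagonal

section ColumnSubmatrix

variable {n N : ℕ} (A : Matrix (Fin n) (Fin N) ℂ) (S : Finset (Fin N))

lemma conjTranspose_colSub_mul_colSub_apply (i j : {j // j ∈ S}) :
    ((colSub A S)ᴴ * colSub A S) i j = ∑ t, starRingEnd ℂ (A t i) * A t j := by
  simp [mul_apply, colSub]

lemma conjTranspose_colSub_mul_colSub_apply_self (hcols : ∀ j, ∑ i, ‖A i j‖ ^ 2 = 1)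
    (j : {j // j ∈ S}) : ((colSub A S)ᴴ * colSub A S) j j = 1 := by
  rw [conjTranspose_colSub_mul_colSub_apply]
  simp_rw [Complex.conj_mul']
  exact_mod_cast hcols j

lemma norm_conjTranspose_colSub_mul_colSub_apply_le {μ : ℝ}
    (hμ : ∀ j l, j ≠ l → ‖∑ i, starRingEnd ℂ (A i j) * A i l‖ ≤ μ) (i j : {j // j ∈ S})
    (hij : i ≠ j) : ‖((colSub A S)ᴴ * colSub A S) i j‖ ≤ μ := by
  rw [conjTranspose_colSub_mul_colSub_apply]
  exact hμ _ _ (Subtype.coe_injective.ne hij)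

lemma conjTranspose_colSub_mulVec_apply (v : Fin n → ℂ) (i : {j // j ∈ S}) :
    ((colSub A S)ᴴ *ᵥ v) i = ∑ t, starRingEnd ℂ (A t i) * v t := by
  simp [mulVec, dotProduct, colSub]

lemma conjTranspose_colSub_mul_colSub_mulVec_pinv_mulVec
    (h : IsUnit ((colSub A S)ᴴ * colSub A S).det) (v : Fin n → ℂ) :
    ((colSub A S)ᴴ * colSub A S) *ᵥ (pinv A S *ᵥ v) = (colSub A S)ᴴ *ᵥ v := by
  rw [pinv, mulVec_mulVec, ← Matrix.mul_assoc, mul_nonsing_inv _ h, Matrix.one_mul]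

end ColumnSubmatrix

/-- Coherence-based bound: if `A` has unit-norm columns, coherence `μ`, `|S| = k` and
`(√k + (k-1)δ) μ < δ` for some `δ > 0`, then `A_S* A_S` is invertible and
`‖A_S† a_ℓ‖₂ ≤ δ` for all `ℓ ∉ S`. -/
theorem stmt_10 (n N : ℕ) (A : Matrix (Fin n) (Fin N) ℂ) (μ : ℝ) (hμ0 : 0 ≤ μ)
    (hcols : ∀ j, ∑ i, ‖A i j‖ ^ 2 = 1)
    (hμ : ∀ j l, j ≠ l → ‖∑ i, (starRingEnd ℂ) (A i j) * A i l‖ ≤ μ)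
    (S : Finset (Fin N)) (k : ℕ) (hk : S.card = k) (δ : ℝ) (hδ : 0 < δ)
    (hcond : (Real.sqrt k + (k - 1 : ℝ) * δ) * μ < δ) :
    IsUnit ((colSub A S)ᴴ * colSub A S).det ∧
      ∀ ℓ ∉ S,
        Real.sqrt (∑ j : {j // j ∈ S}, ‖(pinv A S).mulVec (fun i => A i ℓ) j‖ ^ 2) ≤ δ := by
  have hcard : (Fintype.card {j // j ∈ S} : ℝ) = k := by rw [Fintype.card_coe, hk]
  have hdiag := conjTranspose_colSub_mul_colSub_apply_self A S hcols
  have hoff := norm_conjTranspose_colSub_mul_colSub_apply_le A S hμ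
  have hc : ((k : ℝ) - 1) * μ < 1 := by nlinarith [mul_nonneg (Real.sqrt_nonneg k) hμ0]
  have hdet := isUnit_det_of_unit_diagonal hμ0 hdiag hoff (hcard ▸ hc)
  refine ⟨hdet, fun ℓ hℓ => ?_⟩
  have hb : ‖(WithLp.toLp 2 ((colSub A S)ᴴ *ᵥ fun i => A i ℓ) : EuclideanSpace ℂ _)‖ ≤
      √k * μ := by
    rw [← hk, ← Fintype.card_coe]
    refine norm_toLp_le_sqrt_card_mul hμ0 fun j => ?_
    rw [conjTranspose_colSub_mulVec_apply]
    exact hμ _ _ (ne_of_mem_of_not_mem j.2 hℓ)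
  have hlow :=
    mul_norm_le_norm_mulVec_of_unit_diagonal hμ0 hdiag hoff (pinv A S *ᵥ fun i => A i ℓ)
  rw [conjTranspose_colSub_mul_colSub_mulVec_pinv_mulVec A S hdet, hcard] at hlow
  have hx : (1 - ((k : ℝ) - 1) * μ) * _ < (1 - ((k : ℝ) - 1) * μ) * δ :=
    (hlow.trans hb).trans_lt (by linarith)
  rw [← EuclideanSpace.norm_eq (WithLp.toLp 2 _)]
  exact (lt_of_mul_lt_mul_left hx (by linarith)).le
end

section
/- Let A ∈ ℂ^{n×N}, S ⊆ {1,…,N}, and define δ*(S) = max_{ℓ∉S} ‖A_{S∪{ℓ}}* A_{S∪{ℓ}} − I‖₂. If δ*(S) ≤ δ < 1/2, then ‖A_S† a_ℓ‖₂ ≤ δ/(1−δ) < 1 for all ℓ ∉ S. -/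
/-!
Let `T = S ∪ {ℓ}` and `G_S = A_S* A_S`. Both `G_S - I` and `A_S* a_ℓ` are submatrices of
`G_T - I` (the latter is column `ℓ` restricted to the rows in `S`, where `I` contributes nothing
since `ℓ ∉ S`), and deleting rows or columns never increases the spectral norm. Hence
`‖G_S - I‖ ≤ δ` and `‖A_S* a_ℓ‖ ≤ δ`. The vector `x = A_S† a_ℓ = G_S⁻¹ A_S* a_ℓ` satisfies
`x = A_S* a_ℓ - (G_S - I) x`, so `‖x‖ ≤ δ + δ ‖x‖`, i.e. `‖x‖ ≤ δ / (1 - δ)`.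
-/

open Matrix
open Matrix
open scoped BigOperators Matrix.Norms.L2Operator

lemma EuclideanSpace.norm_toLp_comp_le {𝕜 m n : Type*} [RCLike 𝕜] [Fintype m] [Fintype n]
    {f : m → n} (hf : Function.Injective f) (w : n → 𝕜) :
    ‖WithLp.toLp 2 (w ∘ f)‖ ≤ ‖WithLp.toLp 2 w‖ := by
  rw [EuclideanSpace.norm_eq, EuclideanSpace.norm_eq]
  refine Real.sqrt_le_sqrt ?_
  calc ∑ a, ‖w (f a)‖ ^ 2 = ∑ b ∈ Finset.univ.map ⟨f, hf⟩, ‖w b‖ ^ 2 := by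
        rw [Finset.sum_map]; rfl
    _ ≤ ∑ b, ‖w b‖ ^ 2 := Finset.sum_le_univ_sum_of_nonneg fun _ => by positivity

namespace Matrix

variable {𝕜 : Type*} [RCLike 𝕜] {l m n o : Type*} [Fintype l] [Fintype m] [Fintype n] [Fintype o]

lemma l2_opNorm_submatrix_id_right_le [DecidableEq n] {f : l → m} (hf : Function.Injective f)
    (A : Matrix m n 𝕜) : ‖A.submatrix f id‖ ≤ ‖A‖ := by
  rw [l2_opNorm_def]
  refine ContinuousLinearMap.opNorm_le_bound _ (norm_nonneg _) fun x => ?_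
  exact (EuclideanSpace.norm_toLp_comp_le hf (A *ᵥ x)).trans (A.l2_opNorm_mulVec x)

lemma l2_opNorm_submatrix_id_left_le [DecidableEq m] [DecidableEq n] [DecidableEq o]
    {g : o → n} (hg : Function.Injective g) (A : Matrix m n 𝕜) : ‖A.submatrix id g‖ ≤ ‖A‖ :=
  calc ‖A.submatrix id g‖ = ‖Aᴴ.submatrix g id‖ := by
        rw [← l2_opNorm_conjTranspose (A.submatrix id g), conjTranspose_submatrix]
    _ ≤ ‖Aᴴ‖ := l2_opNorm_submatrix_id_right_le hg Aᴴ
    _ = ‖A‖ := l2_opNorm_conjTranspose A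

lemma l2_opNorm_submatrix_le [DecidableEq l] [DecidableEq n] [DecidableEq o] {f : l → m}
    {g : o → n} (hf : Function.Injective f) (hg : Function.Injective g) (A : Matrix m n 𝕜) :
    ‖A.submatrix f g‖ ≤ ‖A‖ :=
  (l2_opNorm_submatrix_id_left_le hg (A.submatrix f id)).trans
    (l2_opNorm_submatrix_id_right_le hf A)

lemma norm_toLp_col_le [DecidableEq n] (A : Matrix m n 𝕜) (j : n) :
    ‖WithLp.toLp 2 (A.col j)‖ ≤ ‖A‖ := by
  have := A.l2_opNorm_mulVec (EuclideanSpace.single j 1)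
  rw [PiLp.ofLp_single, mulVec_single_one] at this
  simpa using this

lemma isUnit_of_norm_sub_one_lt_one [DecidableEq n] {G : Matrix n n 𝕜} (hG : ‖G - 1‖ < 1) :
    IsUnit G := by
  have := (Units.oneSub (1 - G) (by rwa [norm_sub_rev])).isUnit
  simpa using this

lemma norm_toLp_inv_mulVec_le [DecidableEq n] {G : Matrix n n 𝕜} {δ : ℝ} (hG : ‖G - 1‖ ≤ δ)
    (hδ : δ < 1) (b : n → 𝕜) :
    ‖WithLp.toLp 2 (G⁻¹ *ᵥ b)‖ ≤ ‖WithLp.toLp 2 b‖ / (1 - δ) := by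
  have hdet : IsUnit G.det :=
    (isUnit_iff_isUnit_det G).mp (isUnit_of_norm_sub_one_lt_one (hG.trans_lt hδ))
  have hx : G⁻¹ *ᵥ b = b - (G - 1) *ᵥ (G⁻¹ *ᵥ b) := by
    rw [sub_mulVec, one_mulVec, mulVec_mulVec, mul_nonsing_inv _ hdet, one_mulVec, sub_sub_cancel]
  set x := G⁻¹ *ᵥ b
  have hxb : ‖WithLp.toLp 2 x‖ ≤ ‖WithLp.toLp 2 b‖ + δ * ‖WithLp.toLp 2 x‖ :=
    calc ‖WithLp.toLp 2 x‖ = ‖WithLp.toLp 2 b - WithLp.toLp 2 ((G - 1) *ᵥ x)‖ := by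
          rw [← WithLp.toLp_sub, ← hx]
      _ ≤ ‖WithLp.toLp 2 b‖ + ‖G - 1‖ * ‖WithLp.toLp 2 x‖ := by
          grw [norm_sub_le]
          gcongr
          exact (G - 1).l2_opNorm_mulVec (WithLp.toLp 2 x)
      _ ≤ ‖WithLp.toLp 2 b‖ + δ * ‖WithLp.toLp 2 x‖ := by gcongr
  rw [le_div_iff₀ (sub_pos.mpr hδ)]
  linarith

end Matrix

section

variable {n N : ℕ} (A : Matrix (Fin n) (Fin N) ℂ)

noncomputable def colGram (S : Finset (Fin N)) : Matrix {j // j ∈ S} {j // j ∈ S} ℂ :=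
  (colSub A S)ᴴ * colSub A S

lemma pinv_mulVec (S : Finset (Fin N)) (v : Fin n → ℂ) :
    pinv A S *ᵥ v = (colGram A S)⁻¹ *ᵥ ((colSub A S)ᴴ *ᵥ v) :=
  (mulVec_mulVec _ _ _).symm

variable {S T : Finset (Fin N)}

lemma colSub_eq_submatrix (h : S ⊆ T) :
    colSub A S = (colSub A T).submatrix id (Subtype.map id h) :=
  rfl

lemma colGram_eq_submatrix (h : S ⊆ T) :
    colGram A S = (colGram A T).submatrix (Subtype.map id h) (Subtype.map id h) := by
  rw [colGram, colGram, submatrix_mul _ _ _ id _ Function.bijective_id, ← conjTranspose_submatrix,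
    colSub_eq_submatrix A h]

lemma colGram_sub_one_eq_submatrix (h : S ⊆ T) :
    colGram A S - 1 = (colGram A T - 1).submatrix (Subtype.map id h) (Subtype.map id h) := by
  rw [colGram_eq_submatrix A h, ← submatrix_one _ (Subtype.map_injective h Function.injective_id)]
  rfl

lemma conjTranspose_colSub_mulVec_eq_col {ℓ : Fin N} (hℓ : ℓ ∉ S) :
    (colSub A S)ᴴ *ᵥ (fun i => A i ℓ) =
      ((colGram A (insert ℓ S) - 1).submatrix (Subtype.map id (Finset.subset_insert ℓ S)) id).col
        ⟨ℓ, Finset.mem_insert_self ℓ S⟩ := by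
  funext j
  have hj : (j : Fin N) ≠ ℓ := fun h => hℓ (h ▸ j.2)
  simp [colGram, colSub, mulVec, dotProduct, mul_apply, one_apply, Subtype.ext_iff, hj]

end

/-- If `δ*(S) = max_{ℓ∉S} ‖A_{S∪{ℓ}}* A_{S∪{ℓ}} - I‖₂ ≤ δ < 1/2`, then
`‖A_S† a_ℓ‖₂ ≤ δ/(1-δ) < 1` for all `ℓ ∉ S`. -/
theorem stmt_12 (n N : ℕ) (A : Matrix (Fin n) (Fin N) ℂ) (S : Finset (Fin N))
    (δ : ℝ) (hδ : δ < 1 / 2)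
    (hstar : ∀ ℓ ∉ S,
      ‖(colSub A (insert ℓ S))ᴴ * colSub A (insert ℓ S) - 1‖ ≤ δ) :
    δ / (1 - δ) < 1 ∧
      ∀ ℓ ∉ S,
        Real.sqrt (∑ j : {j // j ∈ S}, ‖(pinv A S).mulVec (fun i => A i ℓ) j‖ ^ 2) ≤
          δ / (1 - δ) := by
  have h1δ : 0 < 1 - δ := by linarith
  refine ⟨(div_lt_one h1δ).mpr (by linarith), fun ℓ hℓ => ?_⟩
  have hι : Function.Injective (Subtype.map id (Finset.subset_insert ℓ S)) :=
    Subtype.map_injective _ Function.injective_id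
  have hM : ‖colGram A (insert ℓ S) - 1‖ ≤ δ := hstar ℓ hℓ
  have hG : ‖colGram A S - 1‖ ≤ δ := by
    rw [colGram_sub_one_eq_submatrix A (Finset.subset_insert ℓ S)]
    exact (l2_opNorm_submatrix_le hι hι _).trans hM
  have hb : ‖WithLp.toLp 2 ((colSub A S)ᴴ *ᵥ fun i => A i ℓ)‖ ≤ δ := by
    rw [conjTranspose_colSub_mulVec_eq_col A hℓ]
    exact (norm_toLp_col_le _ _).trans ((l2_opNorm_submatrix_id_right_le hι _).trans hM)
  calc _ = ‖WithLp.toLp 2 (pinv A S *ᵥ fun i => A i ℓ)‖ := (EuclideanSpace.norm_eq _).symm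
    _ ≤ ‖WithLp.toLp 2 ((colSub A S)ᴴ *ᵥ fun i => A i ℓ)‖ / (1 - δ) := by
        rw [pinv_mulVec]
        exact norm_toLp_inv_mulVec_le hG (by linarith) _
    _ ≤ δ / (1 - δ) := by gcongr
end

section
/- Let A ∈ ℂ^{n×N}, S ⊆ {1,…,N} with δ(S) = ‖A_S*A_S − I‖₂ ≤ δ < 1 and max_{ℓ∉S} ‖A_S* a_ℓ‖₂ ≤ η. Then ‖A_S† a_ℓ‖₂ ≤ η/(1−δ) for all ℓ ∉ S. -/
open Matrix
open Matrix
open scoped BigOperators Matrix.Norms.L2Operator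

/-! Write `G = A_S* A_S`, so that `A_S† a_ℓ = G⁻¹ (A_S* a_ℓ)`. Since `‖1 - G‖ ≤ δ < 1`, the Neumann
series `G⁻¹ = ∑ (1 - G)ᵏ` converges and gives `‖G⁻¹‖₂ ≤ 1 / (1 - δ)`; multiplying by
`‖A_S* a_ℓ‖₂ ≤ η` gives the bound. -/

theorem norm_ringInverse_le_of_norm_sub_one_le {R : Type*} [NormedRing R]
    [HasSummableGeomSeries R] (h1 : ‖(1 : R)‖ ≤ 1) {x : R} {δ : ℝ} (hδ : δ < 1)
    (hx : ‖x - 1‖ ≤ δ) : ‖Ring.inverse x‖ ≤ (1 - δ)⁻¹ := by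
  have ht : ‖1 - x‖ < 1 := by rw [norm_sub_rev]; linarith
  have hδx : (1 - ‖1 - x‖)⁻¹ ≤ (1 - δ)⁻¹ := by rw [norm_sub_rev]; gcongr
  calc ‖Ring.inverse x‖ = ‖∑' k : ℕ, (1 - x) ^ k‖ := by
        rw [geom_series_eq_inverse _ ht, sub_sub_cancel]
    _ ≤ ‖(1 : R)‖ - 1 + (1 - ‖1 - x‖)⁻¹ := tsum_geometric_le_of_norm_lt_one _ ht
    _ ≤ (1 - δ)⁻¹ := by linarith

namespace Matrix

variable {𝕜 m n : Type*} [RCLike 𝕜] [Fintype m] [Fintype n] [DecidableEq n]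

theorem l2_opNorm_one_le : ‖(1 : Matrix n n 𝕜)‖ ≤ 1 := by
  rw [← l2_opNorm_toEuclideanCLM, map_one]
  exact ContinuousLinearMap.norm_id_le

theorem sqrt_sum_norm_sq_mulVec_le (M : Matrix m n 𝕜) (v : n → 𝕜) :
    √(∑ i, ‖(M *ᵥ v) i‖ ^ 2) ≤ ‖M‖ * √(∑ j, ‖v j‖ ^ 2) := by
  have h := l2_opNorm_mulVec M (WithLp.toLp 2 v)
  rwa [EuclideanSpace.norm_eq, EuclideanSpace.norm_eq] at h

end Matrix

/-- If `δ(S) = ‖A_S* A_S - I‖₂ ≤ δ < 1` and `‖A_S* a_ℓ‖₂ ≤ η` for all `ℓ ∉ S`, then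
`‖A_S† a_ℓ‖₂ ≤ η/(1-δ)` for all `ℓ ∉ S`. -/
theorem stmt_13 (n N : ℕ) (A : Matrix (Fin n) (Fin N) ℂ) (S : Finset (Fin N))
    (δ η : ℝ) (hδ1 : δ < 1)
    (hδ : ‖(colSub A S)ᴴ * colSub A S - 1‖ ≤ δ)
    (hη : ∀ ℓ ∉ S,
      Real.sqrt (∑ j : {j // j ∈ S}, ‖(colSub A S)ᴴ.mulVec (fun i => A i ℓ) j‖ ^ 2) ≤ η) :
    ∀ ℓ ∉ S,
      Real.sqrt (∑ j : {j // j ∈ S}, ‖(pinv A S).mulVec (fun i => A i ℓ) j‖ ^ 2) ≤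
        η / (1 - δ) := by
  intro ℓ hℓ
  have hG : ‖Ring.inverse ((colSub A S)ᴴ * colSub A S)‖ ≤ (1 - δ)⁻¹ :=
    norm_ringInverse_le_of_norm_sub_one_le l2_opNorm_one_le hδ1 hδ
  rw [pinv, ← mulVec_mulVec, nonsing_inv_eq_ringInverse, div_eq_inv_mul]
  exact (sqrt_sum_norm_sq_mulVec_le _ _).trans
    (mul_le_mul hG (hη ℓ hℓ) (Real.sqrt_nonneg _) (inv_nonneg.2 (sub_pos.2 hδ1).le))
end

section
/- Let A ∈ ℂ^{n×N} with columns a_ℓ, let S ⊆ {1,…,N} with A_S injective, and let X ∈ ℂ^{N×L} with supp X = S. Suppose there exists H ∈ ℂ^{n×L} with A_S* H = sgn(X^S) and ‖H* a_ℓ‖₂ < 1 for all ℓ ∉ S. Then X is the unique minimizer of ‖Z‖_{2,1} = ∑_{j=1}^N ‖Z^j‖₂ subject to AZ = AX. -/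
open Matrix
open scoped BigOperators

/-- The sign matrix `sgn(X^S)`: each entry of `X^S` divided by the norm of its row. -/
noncomputable def sgnXS {N L : ℕ} (X : Matrix (Fin N) (Fin L) ℂ) (S : Finset (Fin N)) :
    Matrix {j // j ∈ S} (Fin L) ℂ :=
  Matrix.of fun j l => X j.1 l / (Real.sqrt (∑ l', ‖X j.1 l'‖ ^ 2) : ℂ)

/-!
Put `W := (Hᴴ A)ᵀ`, whose row `j` is `(Hᴴ a_j)ᵀ`. The pairing `Re ∑_{j,l} W_{jl} M_{jl}` equals
`Re tr(Hᴴ (A M))`, so it takes the same value on `Z` and on `X`. On `X` it equals `‖X‖_{2,1}`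
because the rows of `W` indexed by `S` are the conjugated signs of the rows of `X`. On `Z` it is at
most `‖Z‖_{2,1}` by Cauchy–Schwarz row by row, since every row of `W` has norm at most `1`, and
strictly less as soon as `Z` has a nonzero row outside `S`. If it has none, `A_S` being injective
forces `Z = X`.
-/

section L2Norm

variable {κ : Type*} [Fintype κ]

noncomputable def l2norm (x : κ → ℂ) : ℝ := Real.sqrt (∑ l, ‖x l‖ ^ 2)

lemma l2norm_pos_of_ne_zero {x : κ → ℂ} (hx : x ≠ 0) : 0 < l2norm x := by
  obtain ⟨l, hl⟩ := Function.ne_iff.1 hx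
  refine Real.sqrt_pos.2 ((pow_pos (norm_pos_iff.2 hl) 2).trans_le ?_)
  exact Finset.single_le_sum (f := fun l => ‖x l‖ ^ 2) (fun _ _ => by positivity)
    (Finset.mem_univ l)

lemma re_sum_mul_le_l2norm_mul_l2norm (w z : κ → ℂ) :
    (∑ l, w l * z l).re ≤ l2norm w * l2norm z := by
  have h := norm_inner_le_norm (𝕜 := ℂ) (E := EuclideanSpace ℂ κ)
    (WithLp.toLp 2 (star w)) (WithLp.toLp 2 z)
  rw [EuclideanSpace.norm_eq, EuclideanSpace.norm_eq] at h
  simp only [PiLp.inner_apply, Pi.star_apply, RCLike.inner_apply, RCLike.star_def,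
    RCLike.conj_conj, RCLike.norm_conj] at h
  exact (Complex.re_le_norm _).trans (by simpa only [l2norm, mul_comm (w _)] using h)

lemma re_sum_mul_le_l2norm {w : κ → ℂ} (hw : l2norm w ≤ 1) (z : κ → ℂ) :
    (∑ l, w l * z l).re ≤ l2norm z :=
  (re_sum_mul_le_l2norm_mul_l2norm w z).trans
    (mul_le_of_le_one_left (Real.sqrt_nonneg _) hw)

lemma re_sum_mul_lt_l2norm {w z : κ → ℂ} (hw : l2norm w < 1) (hz : z ≠ 0) :
    (∑ l, w l * z l).re < l2norm z :=
  (re_sum_mul_le_l2norm_mul_l2norm w z).trans_lt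
    (mul_lt_of_lt_one_left (l2norm_pos_of_ne_zero hz) hw)

lemma sq_l2norm (x : κ → ℂ) : l2norm x ^ 2 = ∑ l, ‖x l‖ ^ 2 :=
  Real.sq_sqrt (Finset.sum_nonneg fun _ _ => by positivity)

/-- At `x = 0` both sides vanish because division by `0` gives `0`. -/
lemma sum_star_div_l2norm_mul_self (x : κ → ℂ) :
    ∑ l, star (x l) / (l2norm x : ℂ) * x l = l2norm x := by
  have hsq : ∑ l, star (x l) * x l = ((l2norm x * l2norm x : ℝ) : ℂ) := by
    simp_rw [← pow_two, sq_l2norm, Complex.ofReal_sum, Complex.ofReal_pow,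
      RCLike.star_def, Complex.conj_mul']
  simp_rw [div_mul_eq_mul_div, ← Finset.sum_div, hsq, Complex.ofReal_mul, mul_self_div_self]

lemma l2norm_star_div_l2norm_le_one (x : κ → ℂ) :
    l2norm (fun l => star (x l) / (l2norm x : ℂ)) ≤ 1 := by
  refine Real.sqrt_le_one.2 ?_
  simp_rw [norm_div, norm_star, Complex.norm_real, Real.norm_eq_abs, div_pow, sq_abs,
    ← Finset.sum_div, ← sq_l2norm]
  exact div_self_le_one _

end L2Norm

section DualCertificate

variable {ι κ : Type*} [Fintype ι] [Fintype κ]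

theorem sum_l2norm_lt_of_dual_certificate (S : Finset ι) (W X Z : Matrix ι κ ℂ)
    (hX : ∀ j ∉ S, X j = 0)
    (hWS : ∀ j ∈ S, ∀ l, W j l = star (X j l) / (l2norm (X j) : ℂ))
    (hWSc : ∀ j ∉ S, l2norm (W j) < 1)
    (hpair : ∑ j, ∑ l, W j l * Z j l = ∑ j, ∑ l, W j l * X j l)
    (hZ : ∃ j ∉ S, Z j ≠ 0) :
    ∑ j, l2norm (X j) < ∑ j, l2norm (Z j) := by
  have hWX : ∀ j, ∑ l, W j l * X j l = l2norm (X j) := by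
    intro j
    by_cases hj : j ∈ S
    · simp_rw [hWS j hj, sum_star_div_l2norm_mul_self]
    · simp [hX j hj, l2norm]
  have hW : ∀ j, l2norm (W j) ≤ 1 := by
    intro j
    by_cases hj : j ∈ S
    · convert l2norm_star_div_l2norm_le_one (X j) using 2
      exact funext (hWS j hj)
    · exact (hWSc j hj).le
  obtain ⟨j₀, hj₀S, hj₀⟩ := hZ
  calc ∑ j, l2norm (X j)
      = (∑ j, ∑ l, W j l * Z j l).re := by
        simp_rw [hpair, hWX, ← Complex.ofReal_sum, Complex.ofReal_re]
    _ = ∑ j, (∑ l, W j l * Z j l).re := Complex.re_sum _ _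
    _ < ∑ j, l2norm (Z j) :=
        Finset.sum_lt_sum (fun j _ => re_sum_mul_le_l2norm (hW j) (Z j))
          ⟨j₀, Finset.mem_univ _, re_sum_mul_lt_l2norm (hWSc j₀ hj₀S) hj₀⟩

end DualCertificate

lemma sum_sum_transpose_mul_eq_trace {ι κ : Type*} [Fintype ι] [Fintype κ]
    (B : Matrix κ ι ℂ) (M : Matrix ι κ ℂ) :
    ∑ j, ∑ l, Bᵀ j l * M j l = trace (B * M) := by
  rw [Finset.sum_comm]
  rfl

lemma colSub_mulVec {n N : ℕ} (A : Matrix (Fin n) (Fin N) ℂ) (S : Finset (Fin N))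
    {v : Fin N → ℂ} (hv : ∀ j ∉ S, v j = 0) :
    colSub A S *ᵥ (fun q => v q) = A *ᵥ v := by
  funext i
  simp only [mulVec, dotProduct, colSub, of_apply]
  rw [Finset.sum_coe_sort S (fun j => A i j * v j)]
  exact Finset.sum_subset (Finset.subset_univ S) fun j _ hj => by rw [hv j hj, mul_zero]

lemma eq_of_mul_eq_mul_of_support_subset {n N L : ℕ} {A : Matrix (Fin n) (Fin N) ℂ}
    {S : Finset (Fin N)} (hinj : Function.Injective fun v : {j // j ∈ S} → ℂ => colSub A S *ᵥ v)
    {X Z : Matrix (Fin N) (Fin L) ℂ} (hX : ∀ j ∉ S, X j = 0) (hZ : ∀ j ∉ S, Z j = 0)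
    (h : A * Z = A * X) : Z = X := by
  ext j l
  by_cases hj : j ∈ S
  · have hcol : colSub A S *ᵥ (fun q => Z q l) = colSub A S *ᵥ (fun q => X q l) := by
      rw [colSub_mulVec A S fun j hj => congrFun (hZ j hj) l,
        colSub_mulVec A S fun j hj => congrFun (hX j hj) l]
      exact funext fun i => congrFun (congrFun h i) l
    exact congrFun (hinj hcol) ⟨j, hj⟩
  · rw [hZ j hj, hX j hj]

/-- Dual certificate condition: if `supp X = S`, `A_S` is injective, and there exists
`H` with `A_S* H = sgn(X^S)` and `‖H* a_ℓ‖₂ < 1` for all `ℓ ∉ S`, then `X` is the unique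
minimizer of `‖·‖_{2,1}` subject to `AZ = AX`. -/
theorem stmt_19 (n N L : ℕ) (A : Matrix (Fin n) (Fin N) ℂ) (S : Finset (Fin N))
    (X : Matrix (Fin N) (Fin L) ℂ)
    (hinj : Function.Injective fun v : {j // j ∈ S} → ℂ => (colSub A S).mulVec v)
    (hsupp : ∀ j, (∃ l, X j l ≠ 0) ↔ j ∈ S)
    (H : Matrix (Fin n) (Fin L) ℂ)
    (hH1 : (colSub A S)ᴴ * H = sgnXS X S)
    (hH2 : ∀ ℓ ∉ S, Real.sqrt (∑ l : Fin L, ‖Hᴴ.mulVec (fun i => A i ℓ) l‖ ^ 2) < 1) :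
    ∀ Z : Matrix (Fin N) (Fin L) ℂ, A * Z = A * X → Z ≠ X →
      ∑ j : Fin N, Real.sqrt (∑ l, ‖X j l‖ ^ 2) <
        ∑ j : Fin N, Real.sqrt (∑ l, ‖Z j l‖ ^ 2) := by
  intro Z hAZ hZX
  have hX : ∀ j ∉ S, X j = 0 := fun j hj =>
    funext fun l => not_not.1 fun hl => hj ((hsupp j).1 ⟨l, hl⟩)
  by_cases hZ : ∃ j ∉ S, Z j ≠ 0
  · refine sum_l2norm_lt_of_dual_certificate S (Hᴴ * A)ᵀ X Z hX (fun j hj l => ?_) hH2 ?_ hZ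
    · have h := congrFun (congrFun (congrArg conjTranspose hH1) l) ⟨j, hj⟩
      rw [conjTranspose_mul, conjTranspose_conjTranspose] at h
      simp only [conjTranspose_apply, sgnXS, of_apply, star_div₀, Complex.star_def,
        Complex.conj_ofReal] at h
      -- `(Hᴴ * colSub A S) l ⟨j, hj⟩` is `(Hᴴ * A) l j` by definition
      exact h
    · simp_rw [sum_sum_transpose_mul_eq_trace, Matrix.mul_assoc, hAZ]
  · push Not at hZ
    exact absurd (eq_of_mul_eq_mul_of_support_subset hinj hX hZ hAZ) hZX
end
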